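/- Let G = (V,E) be a cactus. Then for every X with ∅ ≠ X ⊊ V and d_E(X) = 2, the two edges crossing X belong to a common circuit of G; conversely, for every two distinct edges e,f lying on a common circuit of G, there exists X with ∅ ≠ X ⊊ V and d_E(X) = 2 such that the edges crossing X are exactly e and f. Hence the minimum cuts of a cactus are in one-to-one correspondence with the pairs of edges lying on a common circuit. -/

import Mathlib

open scoped Classical

/-- The edge `e` has exactly one endpoint in `X`. -/
def CrossesEdge {V E : Type*} (ends : E → Sym2 V) (X : Finset V) (e : E) : Prop :=
  ∃ u v, ends e = s(u, v) ∧ u ∈ X ∧ v ∉ X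

/-- The set of edges with exactly one endpoint in `X`. -/
noncomputable def crossSet {V E : Type*} [Fintype E] (ends : E → Sym2 V)
    (X : Finset V) : Finset E :=
  Finset.univ.filter (CrossesEdge ends X)

/-- The number of edges with exactly one endpoint in `X`. -/
noncomputable def cutDeg {V E : Type*} [Fintype E] (ends : E → Sym2 V)
    (X : Finset V) : ℕ :=
  (crossSet ends X).card

/-- `C` is a circuit of the multigraph: the edge set of a simple cycle. -/
noncomputable def IsCircuit {V E : Type*} (ends : E → Sym2 V) (C : Finset E) : Prop :=
  ∃ (m : ℕ) (hm : 2 ≤ m) (e : Fin m → E) (v : Fin m → V),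
    Function.Injective e ∧ Function.Injective v ∧
    (∀ i : Fin m, ends (e i) = s(v i, v ⟨(i.val + 1) % m, Nat.mod_lt _ (by omega)⟩)) ∧
    C = Finset.image e Finset.univ

/-!
Every circuit meets every cut in an even number of edges, so a circuit through one edge of a cut
of value 2 also contains the other one. Conversely, for distinct edges `e` and `f` of a circuit,
let `X` be the component of an endpoint of `e` once `e` and `f` are deleted: no other edge leaves
`X`, and both `e` and `f` do, because a path avoiding `e` and `f` between the endpoints of either
of them would close a second circuit through that edge.
-/

open Finset

section

variable {V E : Type*} {ends : E → Sym2 V}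

@[simp]
theorem mem_crossSet [Fintype E] {X : Finset V} {g : E} :
    g ∈ crossSet ends X ↔ CrossesEdge ends X g := by
  simp [crossSet]

theorem crossesEdge_iff {X : Finset V} {g : E} {a b : V} (hg : ends g = s(a, b)) :
    CrossesEdge ends X g ↔ (a ∈ X ↔ b ∉ X) := by
  simp only [CrossesEdge, hg, Sym2.eq_iff]
  constructor
  · rintro ⟨u, w, (⟨rfl, rfl⟩ | ⟨rfl, rfl⟩), hu, hw⟩ <;> tauto
  · intro h
    by_cases ha : a ∈ X
    · exact ⟨a, b, Or.inl ⟨rfl, rfl⟩, ha, h.mp ha⟩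
    · exact ⟨b, a, Or.inr ⟨rfl, rfl⟩, not_not.mp (mt h.mpr ha), ha⟩

theorem isCircuit_iff {C : Finset E} :
    IsCircuit ends C ↔ ∃ (n : ℕ) (e : Fin (n + 2) → E) (v : Fin (n + 2) → V),
      Function.Injective e ∧ Function.Injective v ∧
      (∀ i, ends (e i) = s(v i, v (i + 1))) ∧ C = univ.image e := by
  have succ_eq {n : ℕ} (i : Fin (n + 2)) :
      (⟨(i.val + 1) % (n + 2), Nat.mod_lt _ (by omega)⟩ : Fin (n + 2)) = i + 1 := by
    ext; simp [Fin.val_add]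
  constructor
  · rintro ⟨m, hm, e, v, he, hv, hev, rfl⟩
    obtain ⟨n, rfl⟩ : ∃ n, m = n + 2 := ⟨m - 2, by omega⟩
    exact ⟨n, e, v, he, hv, fun i => by rw [hev, succ_eq], rfl⟩
  · rintro ⟨n, e, v, he, hv, hev, rfl⟩
    exact ⟨n + 2, by omega, e, v, he, hv, fun i => by rw [hev, succ_eq], rfl⟩

-- Modulo 2, an edge crosses `X` iff exactly one endpoint lies in `X`; summed around a cycle,
-- every vertex is counted twice.
theorem even_card_crossesEdge_of_cycle {m : ℕ} [NeZero m] {e : Fin m → E} {v : Fin m → V}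
    (hev : ∀ i, ends (e i) = s(v i, v (i + 1))) (X : Finset V) :
    Even #{i | CrossesEdge ends X (e i)} := by
  let χ : Fin m → ZMod 2 := fun i => if v i ∈ X then 1 else 0
  have hcross (i : Fin m) :
      (if CrossesEdge ends X (e i) then 1 else 0 : ZMod 2) = χ i + χ (i + 1) := by
    simp only [crossesEdge_iff (hev i), χ]
    by_cases h₁ : v i ∈ X <;> by_cases h₂ : v (i + 1) ∈ X <;>
      simp [h₁, h₂, CharTwo.add_self_eq_zero]
  rw [← ZMod.natCast_eq_zero_iff_even, natCast_card_filter]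
  calc ∑ i, (if CrossesEdge ends X (e i) then 1 else 0 : ZMod 2)
      = ∑ i, χ i + ∑ i, χ (i + 1) := by simp only [hcross, sum_add_distrib]
    _ = ∑ i, χ i + ∑ i, χ i := by
        congr 1; exact Equiv.sum_comp (Equiv.addRight 1) χ
    _ = 0 := CharTwo.add_self_eq_zero _

theorem IsCircuit.even_card_crossSet_inter [Fintype E] {C : Finset E} (hC : IsCircuit ends C)
    (X : Finset V) : Even #(crossSet ends X ∩ C) := by
  obtain ⟨n, e, v, he, -, hev, rfl⟩ := isCircuit_iff.mp hC
  have hinter : crossSet ends X ∩ univ.image e =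
      ({i | CrossesEdge ends X (e i)} : Finset (Fin (n + 2))).image e := by
    ext g
    simp only [mem_inter, mem_crossSet, mem_image, mem_univ, true_and, mem_filter]
    constructor
    · rintro ⟨hg, i, rfl⟩; exact ⟨i, hg, rfl⟩
    · rintro ⟨i, hi, rfl⟩; exact ⟨hi, i, rfl⟩
  rw [hinter, card_image_of_injective _ he]
  exact even_card_crossesEdge_of_cycle hev X

theorem IsCircuit.crossSet_subset_of_cutDeg_eq_two [Fintype E] {C : Finset E} {X : Finset V}
    {g : E} (hC : IsCircuit ends C) (hgC : g ∈ C) (hgX : g ∈ crossSet ends X)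
    (hX : cutDeg ends X = 2) : crossSet ends X ⊆ C := by
  have hpos : 0 < #(crossSet ends X ∩ C) := card_pos.mpr ⟨g, mem_inter.mpr ⟨hgX, hgC⟩⟩
  have hle : #(crossSet ends X ∩ C) ≤ 2 := hX ▸ card_le_card inter_subset_left
  obtain ⟨k, hk⟩ := hC.even_card_crossSet_inter X
  refine inter_eq_left.mp (eq_of_subset_of_card_le inter_subset_left ?_)
  rw [← cutDeg, hX]
  omega

/-- The underlying simple graph of the multigraph with the edges of `S` deleted: parallel edges
merge and loops disappear, which does not affect connectivity. -/
def underlyingGraph (ends : E → Sym2 V) (S : Finset E) : SimpleGraph V :=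
  SimpleGraph.fromEdgeSet {z | ∃ g ∉ S, ends g = z}

theorem underlyingGraph_adj {S : Finset E} {a b : V} :
    (underlyingGraph ends S).Adj a b ↔ (∃ g ∉ S, ends g = s(a, b)) ∧ a ≠ b := by
  simp [underlyingGraph]

theorem crossSet_reachable_subset [Fintype V] [Fintype E] (S : Finset E) (a : V) :
    crossSet ends {w | (underlyingGraph ends S).Reachable a w} ⊆ S := by
  intro g hg
  by_contra hgS
  obtain ⟨u, w, hg, hu, hw⟩ := mem_crossSet.mp hg
  simp only [mem_filter, mem_univ, true_and] at hu hw
  have huw : u ≠ w := by rintro rfl; exact hw hu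
  exact hw (hu.trans (underlyingGraph_adj.mpr ⟨⟨g, hgS, hg⟩, huw⟩).reachable)

theorem reachable_of_cycle {n : ℕ} {e : Fin (n + 1) → E} {v : Fin (n + 1) → V}
    (hv : Function.Injective v) (hev : ∀ i, ends (e i) = s(v i, v (i + 1))) {S : Finset E}
    (j : Fin (n + 1)) (hS : ∀ i < j, e i ∉ S) : (underlyingGraph ends S).Reachable (v 0) (v j) := by
  induction j using Fin.induction with
  | zero => rfl
  | succ k ih =>
    have hadj : (underlyingGraph ends S).Adj (v k.castSucc) (v k.succ) :=
      underlyingGraph_adj.mpr ⟨⟨e k.castSucc, hS _ Fin.castSucc_lt_succ,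
        by rw [hev, Fin.coeSucc_eq_succ]⟩, hv.ne Fin.castSucc_lt_succ.ne⟩
    exact (ih fun i hi => hS i (hi.trans Fin.castSucc_lt_succ)).trans hadj.reachable

theorem SimpleGraph.Walk.IsPath.injective_of_ends_eq {G : SimpleGraph V} {a b : V}
    {p : G.Walk a b} (hp : p.IsPath) {n : ℕ} (hn : n ≤ p.length) {q : Fin n → E}
    (hq : ∀ k : Fin n, ends (q k) = s(p.getVert k, p.getVert (k + 1))) :
    Function.Injective q := by
  intro k l hkl
  have hinj {i j : ℕ} (hi : i ≤ n) (hj : j ≤ n) (h : p.getVert i = p.getVert j) : i = j :=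
    hp.getVert_injOn (by simp; omega) (by simp; omega) h
  have hends := hq k
  rw [hkl, hq l, Sym2.eq_iff] at hends
  rcases hends with ⟨h, -⟩ | ⟨h₁, h₂⟩
  · exact Fin.ext (hinj (by omega) (by omega) h).symm
  · have := hinj (by omega) (by omega) h₁
    have := hinj (by omega) (by omega) h₂
    omega

theorem exists_isCircuit_inter_eq_singleton {S : Finset E} {g : E} {a b : V}
    (hgS : g ∈ S) (hg : ends g = s(a, b)) (hab : a ≠ b)
    (h : (underlyingGraph ends S).Reachable a b) : ∃ C, IsCircuit ends C ∧ C ∩ S = {g} := by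
  obtain ⟨p, hp, -⟩ := h.exists_path_of_dist
  obtain ⟨n, hn⟩ : ∃ n, p.length = n + 1 :=
    Nat.exists_eq_succ_of_ne_zero fun h0 => hab (p.eq_of_length_eq_zero h0)
  have hadj (k : Fin (n + 1)) : ∃ h ∉ S, ends h = s(p.getVert k, p.getVert (k + 1)) :=
    (underlyingGraph_adj.mp (p.adj_getVert_succ (by omega))).1
  choose q hqS hq using hadj
  have hq_inj := hp.injective_of_ends_eq hn.ge hq
  let e : Fin (n + 2) → E := Fin.lastCases g q
  let v : Fin (n + 2) → V := fun k => p.getVert k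
  refine ⟨univ.image e, isCircuit_iff.mpr ⟨n, e, v, ?_, ?_, ?_, rfl⟩, ?_⟩
  · intro k l hkl
    cases k using Fin.lastCases <;> cases l using Fin.lastCases <;>
      simp only [e, Fin.lastCases_last, Fin.lastCases_castSucc] at hkl
    · rfl
    · exact absurd (hkl ▸ hgS) (hqS _)
    · exact absurd (hkl ▸ hgS) (hqS _)
    · rw [hq_inj hkl]
  · intro k l hkl
    exact Fin.ext (hp.getVert_injOn (by simp; omega) (by simp; omega) hkl)
  · intro k
    cases k using Fin.lastCases with
    | last => simp [e, v, Fin.last_add_one, ← hn, hg, Sym2.eq_swap]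
    | cast k => simp [e, v, Fin.coeSucc_eq_succ, hq]
  · ext h
    simp only [mem_inter, mem_image, mem_univ, true_and, mem_singleton]
    constructor
    · rintro ⟨⟨k, rfl⟩, hk⟩
      cases k using Fin.lastCases with
      | last => simp [e]
      | cast k => exact absurd hk (by simpa [e] using hqS k)
    · rintro rfl
      exact ⟨⟨Fin.last _, by simp [e]⟩, hgS⟩

theorem not_reachable_of_forall_isCircuit {S : Finset E} {g f : E} {a b : V} (hgS : g ∈ S)
    (hfS : f ∈ S) (hgf : g ≠ f) (hg : ends g = s(a, b)) (hab : a ≠ b)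
    (hcircuit : ∀ C, IsCircuit ends C → g ∈ C → f ∈ C) :
    ¬ (underlyingGraph ends S).Reachable a b := by
  intro h
  obtain ⟨C, hC, hCS⟩ := exists_isCircuit_inter_eq_singleton hgS hg hab h
  have hgC : g ∈ C := (mem_inter.mp (hCS ▸ mem_singleton_self g)).1
  have hf : f ∈ C ∩ S := mem_inter.mpr ⟨hcircuit C hC hgC, hfS⟩
  rw [hCS, mem_singleton] at hf
  exact hgf hf.symm

theorem exists_crossSet_eq_pair_of_cycle [Fintype V] [Fintype E] {n : ℕ}
    {e : Fin (n + 2) → E} {v : Fin (n + 2) → V} (he : Function.Injective e)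
    (hv : Function.Injective v) (hev : ∀ i, ends (e i) = s(v i, v (i + 1)))
    (hunique : ∀ i C, IsCircuit ends C → e i ∈ C → C = univ.image e)
    {j : Fin (n + 2)} (hj : j ≠ Fin.last _) :
    ∃ X : Finset V, X ≠ ∅ ∧ X ≠ univ ∧ crossSet ends X = {e (Fin.last _), e j} := by
  set S : Finset E := {e (Fin.last _), e j}
  set X : Finset V := {w | (underlyingGraph ends S).Reachable (v 0) w}
  have hmemX {w : V} : w ∈ X ↔ (underlyingGraph ends S).Reachable (v 0) w := by simp [X]
  have hmem_circuit (i k : Fin (n + 2)) (C : Finset E) (hC : IsCircuit ends C) (hiC : e i ∈ C) :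
      e k ∈ C := hunique i C hC hiC ▸ mem_image_of_mem e (mem_univ k)
  have hlast_ne : e (Fin.last _) ≠ e j := he.ne hj.symm
  have h0X : v 0 ∈ X := hmemX.mpr .rfl
  have hlastX : v (Fin.last _) ∉ X := fun h =>
    not_reachable_of_forall_isCircuit (by simp [S]) (by simp [S]) hlast_ne
      (by rw [hev, Fin.last_add_one]) (hv.ne (Fin.last_pos.ne')) (hmem_circuit _ j)
      (hmemX.mp h).symm
  have hjX : v j ∈ X := hmemX.mpr <| reachable_of_cycle hv hev j fun i hi => by
    simp only [S, mem_insert, mem_singleton, not_or]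
    exact ⟨he.ne (hi.trans_le (Fin.le_last j)).ne, he.ne hi.ne⟩
  have hj1X : v (j + 1) ∉ X := fun h =>
    not_reachable_of_forall_isCircuit (by simp [S]) (by simp [S]) hlast_ne.symm (hev j)
      (hv.ne (by simp)) (hmem_circuit _ _) ((hmemX.mp hjX).symm.trans (hmemX.mp h))
  refine ⟨X, ne_empty_of_mem h0X, fun h => hlastX (h ▸ mem_univ _),
    (crossSet_reachable_subset S (v 0)).antisymm ?_⟩
  rw [insert_subset_iff, singleton_subset_iff, mem_crossSet, mem_crossSet]
  exact ⟨⟨v 0, v (Fin.last _), by rw [hev, Fin.last_add_one, Sym2.eq_swap], h0X, hlastX⟩,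
    ⟨v j, v (j + 1), hev j, hjX, hj1X⟩⟩

theorem IsCircuit.exists_crossSet_eq_pair [Fintype V] [Fintype E] {C : Finset E}
    (hC : IsCircuit ends C) (hunique : ∀ g ∈ C, ∀ C', IsCircuit ends C' → g ∈ C' → C' = C)
    {f g : E} (hf : f ∈ C) (hg : g ∈ C) (hfg : f ≠ g) :
    ∃ X : Finset V, X ≠ ∅ ∧ X ≠ univ ∧ crossSet ends X = {f, g} := by
  obtain ⟨n, e, v, he, hv, hev, rfl⟩ := isCircuit_iff.mp hC
  obtain ⟨i, -, rfl⟩ := mem_image.mp hf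
  obtain ⟨j, -, rfl⟩ := mem_image.mp hg
  let r : Fin (n + 2) ≃ Fin (n + 2) := Equiv.addRight (i + 1)
  have hr_last : r (Fin.last _) = i := by
    change Fin.last _ + (i + 1) = i
    rw [add_comm i, ← add_assoc, Fin.last_add_one, zero_add]
  have hr_j : r (j - (i + 1)) = j := sub_add_cancel j (i + 1)
  have hj : j - (i + 1) ≠ Fin.last _ := fun h => hfg (by rw [← hr_j, h, hr_last])
  have hevr (k : Fin (n + 2)) : ends (e (r k)) = s(v (r k), v (r (k + 1))) := by
    simp only [r, Equiv.coe_addRight, hev, add_right_comm k]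
  have himage : univ.image (e ∘ r) = univ.image e := by
    rw [image_comp, image_univ_equiv]
  have huniquer (k : Fin (n + 2)) (C' : Finset E) (hC' : IsCircuit ends C')
      (hkC' : (e ∘ r) k ∈ C') : C' = univ.image (e ∘ r) :=
    himage ▸ hunique _ (mem_image_of_mem e (mem_univ _)) C' hC' hkC'
  simpa only [Function.comp, hr_last, hr_j] using
    exists_crossSet_eq_pair_of_cycle (he.comp r.injective) (hv.comp r.injective) hevr huniquer hj

end

theorem cactus_minCuts_eq_circuit_pairs_general {V E : Type*} [Fintype V] [Fintype E]
    (ends : E → Sym2 V)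
    (hcactus : ∀ e : E, ∃! C : Finset E, IsCircuit ends C ∧ e ∈ C) :
    (∀ X : Finset V, X ≠ ∅ → X ≠ Finset.univ → cutDeg ends X = 2 →
        ∃ C : Finset E, IsCircuit ends C ∧ crossSet ends X ⊆ C) ∧
      (∀ e f : E, e ≠ f → (∃ C : Finset E, IsCircuit ends C ∧ e ∈ C ∧ f ∈ C) →
        ∃ X : Finset V, X ≠ ∅ ∧ X ≠ Finset.univ ∧ cutDeg ends X = 2 ∧
          crossSet ends X = {e, f}) := by
  refine ⟨fun X _ _ hX => ?_, fun e f hef ⟨C, hC, heC, hfC⟩ => ?_⟩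
  · obtain ⟨g, hg⟩ : (crossSet ends X).Nonempty := card_pos.mp (by rw [← cutDeg, hX]; omega)
    obtain ⟨C, ⟨hC, hgC⟩, -⟩ := hcactus g
    exact ⟨C, hC, hC.crossSet_subset_of_cutDeg_eq_two hgC hg hX⟩
  · have hunique (g) (hg : g ∈ C) (C') (hC' : IsCircuit ends C') (hgC' : g ∈ C') : C' = C :=
      (hcactus g).unique ⟨hC', hgC'⟩ ⟨hC, hg⟩
    obtain ⟨X, hX₀, hXuniv, hXcross⟩ := hC.exists_crossSet_eq_pair hunique heC hfC hef
    exact ⟨X, hX₀, hXuniv, by rw [cutDeg, hXcross, card_pair hef], hXcross⟩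

/-- In a cactus, the minimum cuts (cuts of value 2) correspond exactly to the pairs of
edges lying on a common circuit: the two edges crossing any cut of value 2 lie on a
common circuit, and conversely for any two distinct edges on a common circuit there is
a cut of value 2 crossed by exactly these two edges. -/
theorem cactus_minCuts_eq_circuit_pairs {V E : Type*} [Fintype V] [Fintype E]
    (ends : E → Sym2 V) (hloopless : ∀ e : E, ¬ (ends e).IsDiag)
    (hV : 2 ≤ Fintype.card V)
    (h2ec : ∀ X : Finset V, X ≠ ∅ → X ≠ Finset.univ → 2 ≤ cutDeg ends X)
    (hcactus : ∀ e : E, ∃! C : Finset E, IsCircuit ends C ∧ e ∈ C) :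
    (∀ X : Finset V, X ≠ ∅ → X ≠ Finset.univ → cutDeg ends X = 2 →
        ∃ C : Finset E, IsCircuit ends C ∧ crossSet ends X ⊆ C) ∧
      (∀ e f : E, e ≠ f → (∃ C : Finset E, IsCircuit ends C ∧ e ∈ C ∧ f ∈ C) →
        ∃ X : Finset V, X ≠ ∅ ∧ X ≠ Finset.univ ∧ cutDeg ends X = 2 ∧
          crossSet ends X = {e, f}) :=
  cactus_minCuts_eq_circuit_pairs_general ends hcactus
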